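/- The maximum-concurrent-flow objective is Lipschitz in the flow vector: let ε > 0 and let D : U → ℝ be a demand vector with D u ≥ 0 for all u and such that every nonzero demand satisfies D u ≥ ε. Then, each tunnel containing at least one edge, for all x, y : T → ℝ with x, y ≥ 0 componentwise, |f_MCONC(x, D) − f_MCONC(y, D)| ≤ (max_{u ∈ U} card {p ∈ T : pair p = u}) · (2·C_max / (ε·C_min)) · Σ_{p ∈ T} |x p − y p|. -/

import Mathlib

open Finset

/-- Load on edge `e` induced by the flow vector `x`: `Σ_{p ∈ T, e ∈ p} x p`. -/
noncomputable def edgeLoad {E T : Type*} [Fintype T] [DecidableEq E]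
    (tun : T → Finset E) (x : T → ℝ) (e : E) : ℝ :=
  ∑ p, if e ∈ tun p then x p else 0

/-- Normalization constant `γ(x) = max (max_{e ∈ E} load_e(x) / C e) 1`. -/
noncomputable def gamma {E T : Type*} [Fintype E] [Nonempty E] [Fintype T] [DecidableEq E]
    (C : E → ℝ) (tun : T → Finset E) (x : T → ℝ) : ℝ :=
  max (univ.sup' univ_nonempty (fun e => edgeLoad tun x e / C e)) 1

/-- Normalized pair flow `y_u(x) = (Σ_{p ∈ T, pair p = u} x p) / γ(x)`. -/
noncomputable def pairFlow {E T U : Type*} [Fintype E] [Nonempty E] [Fintype T]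
    [DecidableEq E] [DecidableEq U]
    (C : E → ℝ) (tun : T → Finset E) (pair : T → U) (x : T → ℝ) (u : U) : ℝ :=
  (∑ p, if pair p = u then x p else 0) / gamma C tun x

/-- Maximum-multicommodity-flow objective `f_MMCF(x, D) = Σ_{u ∈ U} min (D u) (y_u(x))`. -/
noncomputable def fMMCF {E T U : Type*} [Fintype E] [Nonempty E] [Fintype T] [Fintype U]
    [DecidableEq E] [DecidableEq U]
    (C : E → ℝ) (tun : T → Finset E) (pair : T → U) (D : U → ℝ) (x : T → ℝ) : ℝ :=
  ∑ u, min (D u) (pairFlow C tun pair x u)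

/-- Maximum-concurrent-flow objective: the minimum of the finite set
`{y_u(x) / D u : u ∈ U, D u > 0} ∪ {1}`. -/
noncomputable def fMCONC {E T U : Type*} [Fintype E] [Nonempty E] [Fintype T] [Fintype U]
    [DecidableEq E] [DecidableEq U]
    (C : E → ℝ) (tun : T → Finset E) (pair : T → U) (D : U → ℝ) (x : T → ℝ) : ℝ :=
  Finset.fold min 1 (fun u => pairFlow C tun pair x u / D u) (univ.filter fun u => 0 < D u)

/-! The minimum defining `fMCONC` is 1-Lipschitz in its arguments, and `ε ≤ D u` on the pairs
that enter it, so it suffices to bound `|y_u(x) - y_u(y)|`. Writing `y_u = S_u / γ`, split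
`S_u(x) / γ(x) - S_u(y) / γ(y) = (S_u(x) - S_u(y)) / γ(x) + y_u(y) (γ(y) - γ(x)) / γ(x)`.
Edge loads and pair sums are 1-Lipschitz for the ℓ1 norm, hence `γ ≥ 1` is
`1 / C_min`-Lipschitz; and for `y ≥ 0` a tunnel carries at most the load of any of its edges,
which is at most `C_max γ(y)`, whence `y_u(y) ≤ N C_max` with `N` the largest number of tunnels
of a pair. -/

theorem abs_fold_min_sub_fold_min_le {ι α : Type*} [AddCommGroup α] [LinearOrder α]
    [IsOrderedAddMonoid α] (s : Finset ι) (b : α) (f g : ι → α) {K : α} (hK : 0 ≤ K)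
    (h : ∀ i ∈ s, |f i - g i| ≤ K) :
    |s.fold min b f - s.fold min b g| ≤ K := by
  induction s using Finset.cons_induction with
  | empty => simpa using hK
  | cons a s ha ih =>
    rw [fold_cons, fold_cons]
    exact (abs_min_sub_min_le_max _ _ _ _).trans
      (max_le (h a (mem_cons_self _ _)) (ih fun i hi => h i (mem_cons_of_mem hi)))

theorem abs_sum_ite_sub_sum_ite_le {T : Type*} [Fintype T] (P : T → Prop) [DecidablePred P]
    (x y : T → ℝ) :
    |(∑ p, if P p then x p else 0) - ∑ p, if P p then y p else 0| ≤ ∑ p, |x p - y p| := by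
  rw [← sum_sub_distrib]
  refine (abs_sum_le_sum_abs _ _).trans (sum_le_sum fun p _ => ?_)
  split_ifs <;> simp

theorem abs_div_sub_div_le {a b c d : ℝ} (hc : 1 ≤ c) (hd : 0 < d) :
    |a / c - b / d| ≤ |a - b| + |b / d| * |c - d| := by
  have hc₀ : 0 < c := one_pos.trans_le hc
  have hsplit : a / c - b / d = (a - b) / c + b / d * ((d - c) / c) := by
    field_simp
    ring
  rw [hsplit, abs_sub_comm c d]
  refine (abs_add_le _ _).trans (add_le_add ?_ ?_)
  · rw [abs_div, abs_of_pos hc₀]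
    exact div_le_self (abs_nonneg _) hc
  · rw [abs_mul, abs_div (d - c), abs_of_pos hc₀]
    gcongr
    exact div_le_self (abs_nonneg _) hc

theorem Finset.inf'_le_sup' {ι α : Type*} [Lattice α] (s : Finset ι) (hs : s.Nonempty)
    (f : ι → α) : s.inf' hs f ≤ s.sup' hs f :=
  (inf'_le f hs.choose_spec).trans (le_sup' f hs.choose_spec)

theorem Finset.one_le_sup'_div_inf' {ι : Type*} (s : Finset ι) (hs : s.Nonempty) {f : ι → ℝ}
    (hf : ∀ i ∈ s, 0 < f i) : 1 ≤ s.sup' hs f / s.inf' hs f :=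
  (one_le_div ((lt_inf'_iff hs).2 hf)).2 (inf'_le_sup' s hs f)

section Network

variable {E T : Type*} [Fintype T] [DecidableEq E]

theorem abs_edgeLoad_sub_edgeLoad_le (tun : T → Finset E) (x y : T → ℝ) (e : E) :
    |edgeLoad tun x e - edgeLoad tun y e| ≤ ∑ p, |x p - y p| :=
  abs_sum_ite_sub_sum_ite_le _ x y

theorem le_edgeLoad (tun : T → Finset E) {x : T → ℝ} (hx : ∀ p, 0 ≤ x p) {p : T} {e : E}
    (he : e ∈ tun p) :
    x p ≤ edgeLoad tun x e := by
  unfold edgeLoad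
  simpa [he] using single_le_sum (f := fun q => if e ∈ tun q then x q else 0)
    (fun q _ => by split_ifs <;> simp [hx q]) (mem_univ p)

variable [Fintype E] [Nonempty E] (C : E → ℝ) (tun : T → Finset E)

theorem one_le_gamma (x : T → ℝ) : 1 ≤ gamma C tun x :=
  le_max_right _ _

theorem edgeLoad_div_le_gamma (x : T → ℝ) (e : E) : edgeLoad tun x e / C e ≤ gamma C tun x :=
  (le_sup' (fun e => edgeLoad tun x e / C e) (mem_univ e)).trans (le_max_left _ _)

theorem gamma_le_gamma_add (hC : ∀ e, 0 < C e) (x y : T → ℝ) :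
    gamma C tun x ≤ gamma C tun y + (∑ p, |x p - y p|) / univ.inf' univ_nonempty C := by
  have hδ : 0 ≤ (∑ p, |x p - y p|) / univ.inf' univ_nonempty C :=
    div_nonneg (sum_nonneg fun _ _ => abs_nonneg _) ((lt_inf'_iff _).2 fun e _ => hC e).le
  refine max_le (sup'_le _ _ fun e _ => ?_) (by linarith [one_le_gamma C tun y])
  have hload : edgeLoad tun x e ≤ edgeLoad tun y e + ∑ p, |x p - y p| := by
    linarith [le_abs_self (edgeLoad tun x e - edgeLoad tun y e),
      abs_edgeLoad_sub_edgeLoad_le tun x y e]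
  calc edgeLoad tun x e / C e ≤ edgeLoad tun y e / C e + (∑ p, |x p - y p|) / C e := by
        rw [← add_div]; gcongr; exact (hC e).le
    _ ≤ gamma C tun y + (∑ p, |x p - y p|) / univ.inf' univ_nonempty C := by
        gcongr
        · exact edgeLoad_div_le_gamma C tun y e
        · exact (lt_inf'_iff _).2 fun e _ => hC e
        · exact inf'_le _ (mem_univ e)

theorem abs_gamma_sub_gamma_le (hC : ∀ e, 0 < C e) (x y : T → ℝ) :
    |gamma C tun x - gamma C tun y| ≤ (∑ p, |x p - y p|) / univ.inf' univ_nonempty C := by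
  have hyx := gamma_le_gamma_add C tun hC y x
  simp only [abs_sub_comm (y _)] at hyx
  exact abs_sub_le_iff.2 ⟨by linarith [gamma_le_gamma_add C tun hC x y], by linarith⟩

theorem le_sup'_mul_gamma (hC : ∀ e, 0 < C e) (htun : ∀ p, (tun p).Nonempty) {x : T → ℝ}
    (hx : ∀ p, 0 ≤ x p) (p : T) : x p ≤ univ.sup' univ_nonempty C * gamma C tun x := by
  obtain ⟨e, he⟩ := htun p
  calc x p ≤ edgeLoad tun x e := le_edgeLoad tun hx he
    _ ≤ C e * gamma C tun x := by
        rw [← div_le_iff₀' (hC e)]; exact edgeLoad_div_le_gamma C tun x e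
    _ ≤ univ.sup' univ_nonempty C * gamma C tun x := by
        gcongr
        · linarith [one_le_gamma C tun x]
        · exact le_sup' _ (mem_univ e)

variable {U : Type*} [DecidableEq U] (pair : T → U)

theorem pairFlow_nonneg {x : T → ℝ} (hx : ∀ p, 0 ≤ x p) (u : U) :
    0 ≤ pairFlow C tun pair x u :=
  div_nonneg (sum_nonneg fun p _ => by split_ifs <;> simp [hx p])
    (one_pos.trans_le (one_le_gamma C tun x)).le

variable [Fintype U]

theorem one_le_sup_card_filter_pair_eq (p : T) : 1 ≤ univ.sup fun u => #{q | pair q = u} :=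
  (card_pos.2 ⟨p, by simp⟩).trans_le
    (le_sup (f := fun u => #{q | pair q = u}) (mem_univ (pair p)))

theorem pairFlow_le (hC : ∀ e, 0 < C e) (htun : ∀ p, (tun p).Nonempty) {x : T → ℝ}
    (hx : ∀ p, 0 ≤ x p) (u : U) :
    pairFlow C tun pair x u ≤
      ((univ.sup fun u => #{p | pair p = u} : ℕ) : ℝ) * univ.sup' univ_nonempty C := by
  have hγ : 0 < gamma C tun x := one_pos.trans_le (one_le_gamma C tun x)
  rw [pairFlow, div_le_iff₀ hγ, ← sum_filter, mul_assoc]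
  calc ∑ p ∈ {p | pair p = u}, x p
      ≤ #{p | pair p = u} • (univ.sup' univ_nonempty C * gamma C tun x) :=
        sum_le_card_nsmul _ _ _ fun p _ => le_sup'_mul_gamma C tun hC htun hx p
    _ ≤ _ := by
        rw [nsmul_eq_mul]
        gcongr
        · exact mul_nonneg ((hC (Classical.arbitrary E)).le.trans (le_sup' C (mem_univ _))) hγ.le
        · exact le_sup (f := fun u => #{p | pair p = u}) (mem_univ u)

theorem abs_pairFlow_sub_pairFlow_le (hC : ∀ e, 0 < C e) (htun : ∀ p, (tun p).Nonempty)
    {y : T → ℝ} (hy : ∀ p, 0 ≤ y p) (x : T → ℝ) (u : U) :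
    |pairFlow C tun pair x u - pairFlow C tun pair y u| ≤
      ((univ.sup fun u => #{p | pair p = u} : ℕ) : ℝ)
        * (2 * univ.sup' univ_nonempty C / univ.inf' univ_nonempty C) * ∑ p, |x p - y p| := by
  set N : ℝ := ((univ.sup fun u => #{p | pair p = u} : ℕ) : ℝ)
  set Cmax := univ.sup' univ_nonempty C
  set Cmin := univ.inf' univ_nonempty C
  set δ := ∑ p, |x p - y p|
  have hδ_le : δ ≤ N * δ := by
    rw [mul_sum]
    exact sum_le_sum fun p _ => le_mul_of_one_le_left (abs_nonneg _)
      (Nat.one_le_cast.2 (one_le_sup_card_filter_pair_eq pair p))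
  have hflow : |pairFlow C tun pair y u| ≤ N * Cmax := by
    rw [abs_of_nonneg (pairFlow_nonneg C tun pair hy u)]
    exact pairFlow_le C tun pair hC htun hy u
  calc |pairFlow C tun pair x u - pairFlow C tun pair y u|
      ≤ δ + N * Cmax * (δ / Cmin) :=
        (abs_div_sub_div_le (one_le_gamma C tun x) (one_pos.trans_le (one_le_gamma C tun y))).trans
          (add_le_add (abs_sum_ite_sub_sum_ite_le _ x y)
            (mul_le_mul hflow (abs_gamma_sub_gamma_le C tun hC x y) (abs_nonneg _)
              ((abs_nonneg _).trans hflow)))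
    _ ≤ N * δ * (Cmax / Cmin) + N * Cmax * (δ / Cmin) := by
        gcongr
        calc δ ≤ N * δ := hδ_le
          _ ≤ N * δ * (Cmax / Cmin) :=
            le_mul_of_one_le_right ((sum_nonneg fun _ _ => abs_nonneg _).trans hδ_le)
              (one_le_sup'_div_inf' univ univ_nonempty fun e _ => hC e)
    _ = N * (2 * Cmax / Cmin) * δ := by ring

end Network

theorem fMCONC_lipschitz_general {E T U : Type*} [Fintype E] [Nonempty E] [Fintype T] [Fintype U]
    [DecidableEq E] [DecidableEq U]
    (C : E → ℝ) (hC : ∀ e, 0 < C e) (tun : T → Finset E) (htun : ∀ p, (tun p).Nonempty)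
    (pair : T → U)
    (ε : ℝ) (hε : 0 < ε)
    (D : U → ℝ) (hDε : ∀ u, D u ≠ 0 → ε ≤ D u)
    (x y : T → ℝ) (hy : ∀ p, 0 ≤ y p) :
    |fMCONC C tun pair D x - fMCONC C tun pair D y| ≤
      ((univ.sup fun u => (univ.filter fun p => pair p = u).card : ℕ) : ℝ)
        * (2 * univ.sup' univ_nonempty C / (ε * univ.inf' univ_nonempty C))
        * ∑ p, |x p - y p| := by
  set L := ((univ.sup fun u => (univ.filter fun p => pair p = u).card : ℕ) : ℝ)
    * (2 * univ.sup' univ_nonempty C / univ.inf' univ_nonempty C) * ∑ p, |x p - y p|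
  have hbound := abs_pairFlow_sub_pairFlow_le C tun pair hC htun hy x
  have hL : 0 ≤ L := mul_nonneg (mul_nonneg (Nat.cast_nonneg _)
    (by rw [mul_div_assoc]; linarith [one_le_sup'_div_inf' univ univ_nonempty fun e _ => hC e]))
    (sum_nonneg fun _ _ => abs_nonneg _)
  calc |fMCONC C tun pair D x - fMCONC C tun pair D y| ≤ L / ε := by
        refine abs_fold_min_sub_fold_min_le _ _ _ _ (div_nonneg hL hε.le) fun u hu => ?_
        have hDu : 0 < D u := (mem_filter.1 hu).2
        rw [div_sub_div_same, abs_div, abs_of_pos hDu]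
        exact div_le_div₀ hL (hbound u) hε (hDε u hDu.ne')
    _ = _ := by ring

/-- The maximum-concurrent-flow objective is Lipschitz in the flow vector w.r.t. the ℓ1 norm,
with constant `(max_u #{p : pair p = u}) · 2 C_max / (ε C_min)`, where every nonzero demand
is at least `ε`. -/
theorem fMCONC_lipschitz {E T U : Type*} [Fintype E] [Nonempty E] [Fintype T] [Fintype U]
    [DecidableEq E] [DecidableEq U]
    (C : E → ℝ) (hC : ∀ e, 0 < C e) (tun : T → Finset E) (htun : ∀ p, (tun p).Nonempty)
    (pair : T → U)
    (ε : ℝ) (hε : 0 < ε)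
    (D : U → ℝ) (hD : ∀ u, 0 ≤ D u) (hDε : ∀ u, D u ≠ 0 → ε ≤ D u)
    (x y : T → ℝ) (hx : ∀ p, 0 ≤ x p) (hy : ∀ p, 0 ≤ y p) :
    |fMCONC C tun pair D x - fMCONC C tun pair D y| ≤
      ((univ.sup fun u => (univ.filter fun p => pair p = u).card : ℕ) : ℝ)
        * (2 * univ.sup' univ_nonempty C / (ε * univ.inf' univ_nonempty C))
        * ∑ p, |x p - y p| :=
  fMCONC_lipschitz_general C hC tun htun pair ε hε D hDε x y hy
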